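/- Let (C, ⊗) be a locally presentable closed symmetric monoidal abelian category whose monoidal unit V is a finitely presented projective separator. If M and N are finitely generated objects of C, then the tensor product M ⊗ N is finitely generated. -/

import Mathlib

open CategoryTheory CategoryTheory.Limits Opposite

universe v u

namespace Paper

variable {C : Type u} [Category.{v} C]

/-- The canonical comparison map `colim_α Hom(X, M_α) ⟶ Hom(X, colim_α M_α)` induced by the
structure morphisms of a cocone `c` on a diagram `D`. -/
noncomputable def canonicalMap (X : C) {J : Type v} [SmallCategory J]
    (D : J ⥤ C) (c : Cocone D) :
    colimit (D ⋙ coyoneda.obj (op X)) → (X ⟶ c.pt) :=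
  colimit.desc (D ⋙ coyoneda.obj (op X)) ((coyoneda.obj (op X)).mapCocone c)

/-- An object `X` is finitely presented if for every filtered inductive system the canonical map
`colim_α Hom(X, M_α) → Hom(X, colim_α M_α)` is bijective. -/
def IsFinitelyPresented (X : C) : Prop :=
  ∀ (J : Type v) [SmallCategory J] [IsFiltered J] (D : J ⥤ C) (c : Cocone D),
    IsColimit c → Function.Bijective (canonicalMap X D c)

/-- An object `X` is finitely generated if for every filtered inductive system the canonical map
`colim_α Hom(X, M_α) → Hom(X, colim_α M_α)` is injective. -/
def IsFinitelyGenerated (X : C) : Prop :=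
  ∀ (J : Type v) [SmallCategory J] [IsFiltered J] (D : J ⥤ C) (c : Cocone D),
    IsColimit c → Function.Injective (canonicalMap X D c)

/-- A small category `J` is `κ`-filtered if every diagram in `J` of size `< κ` admits a cocone. -/
def IsCardinalFiltered (J : Type v) [SmallCategory J] (κ : Cardinal.{v}) : Prop :=
  ∀ (K : Type v) [SmallCategory K], Cardinal.mk (Σ k k' : K, k ⟶ k') < κ →
    ∀ F : K ⥤ J, Nonempty (Cocone F)

/-- An object `X` is `κ`-presentable if `Hom(X, -)` preserves `κ`-filtered colimits. -/
def IsCardinalPresentableObj (κ : Cardinal.{v}) (X : C) : Prop :=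
  ∀ (J : Type v) [SmallCategory J], IsCardinalFiltered J κ →
    ∀ (D : J ⥤ C) (c : Cocone D), IsColimit c → Function.Bijective (canonicalMap X D c)

/-- A presentation of `X` as a `κ`-filtered colimit of objects belonging to `S`. -/
structure FilteredPresentation (κ : Cardinal.{v}) (S : Set C) (X : C) where
  J : Type v
  [cat : SmallCategory J]
  filtered : IsCardinalFiltered J κ
  D : J ⥤ C
  mem : ∀ j, D.obj j ∈ S
  c : Cocone D
  isColimit : IsColimit c
  eq : c.pt = X

attribute [instance] FilteredPresentation.cat

/-- A category is locally presentable if it is cocomplete and there are a regular cardinal `κ`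
and a set of `κ`-presentable objects such that every object is a `κ`-filtered colimit of
objects from this set. -/
class LocallyPresentable (C : Type u) [Category.{v} C] : Prop where
  hasColimits : HasColimits C
  presentable : ∃ κ : Cardinal.{v}, κ.IsRegular ∧ ∃ S : Set C, Small.{v} ↥S ∧
    (∀ X ∈ S, IsCardinalPresentableObj κ X) ∧ ∀ X : C, Nonempty (FilteredPresentation κ S X)

instance (priority := 100) [LocallyPresentable C] : HasColimits C :=
  LocallyPresentable.hasColimits

end Paper

/-!
Write `[M, -]` for the internal hom. Since `Hom(𝟙, [M, X]) ≅ Hom(M, X)` naturally in `X`, finite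
generation of `M` says that `Hom(𝟙, -)` is injective on the comparison map from
`colim [M, D_j]` to `[M, colim D_j]` for a filtered diagram `D`; as the unit is a finitely
presented separator, this makes the comparison map a monomorphism. Hence
`Hom(N, colim [M, D_j])` embeds into `Hom(N, [M, colim D_j]) ≅ Hom(M ⊗ N, colim D_j)`, and the
canonical map of `M ⊗ N` inherits injectivity from that of `N`.
-/

namespace Paper

section CanonicalMap

variable {C : Type u} [Category.{v} C] {J : Type v} [SmallCategory J]

@[simp]
lemma canonicalMap_ι (X : C) (D : J ⥤ C) (c : Cocone D) (j : J) (f : X ⟶ D.obj j) :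
    canonicalMap X D c (colimit.ι (D ⋙ coyoneda.obj (op X)) j f) = f ≫ c.ι.app j :=
  colimit.ι_desc_apply ((coyoneda.obj (op X)).mapCocone c) j f

lemma canonicalMap_eq_comp_colimit_desc (X : C) (D : J ⥤ C) [HasColimit D] (c : Cocone D)
    (x : colimit (D ⋙ coyoneda.obj (op X))) :
    canonicalMap X D c x = canonicalMap X D (colimit.cocone D) x ≫ colimit.desc D c := by
  obtain ⟨j, f, rfl⟩ := Types.jointly_surjective' x
  simp only [canonicalMap_ι, colimit.cocone_ι, Category.assoc, colimit.ι_desc]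

lemma injective_canonicalMap_of_mono_colimit_desc {X : C} {D : J ⥤ C} [HasColimit D]
    {c : Cocone D} [Mono (colimit.desc D c)]
    (h : Function.Injective (canonicalMap X D (colimit.cocone D))) :
    Function.Injective (canonicalMap X D c) := by
  intro x y hxy
  rw [canonicalMap_eq_comp_colimit_desc, canonicalMap_eq_comp_colimit_desc X D c y,
    cancel_mono] at hxy
  exact h hxy

lemma mono_colimit_desc_of_isSeparator {S : C} (hS : IsSeparator S)
    (hSfp : IsFinitelyPresented S) [IsFiltered J] {D : J ⥤ C} [HasColimit D] {c : Cocone D}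
    (h : Function.Injective (canonicalMap S D c)) : Mono (colimit.desc D c) := by
  refine ⟨fun {Z} a b hab => (isSeparator_def S).1 hS a b fun s => ?_⟩
  have hsurj := (hSfp J D _ (colimit.isColimit D)).2
  obtain ⟨x, hx⟩ := hsurj (s ≫ a)
  obtain ⟨y, hy⟩ := hsurj (s ≫ b)
  have hxy : x = y := h <| by
    rw [canonicalMap_eq_comp_colimit_desc, canonicalMap_eq_comp_colimit_desc S D c y, hx, hy,
      Category.assoc, Category.assoc, hab]
  rw [← hx, ← hy, hxy]

lemma injective_canonicalMap_iff_of_corepresentableBy {C' : Type*} [Category.{v} C']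
    {G : C ⥤ C'} {X : C} {Y : C'} (e : (G ⋙ coyoneda.obj (op Y)).CorepresentableBy X)
    (D : J ⥤ C) (c : Cocone D) :
    Function.Injective (canonicalMap X D c) ↔
      Function.Injective (canonicalMap Y (D ⋙ G) (G.mapCocone c)) := by
  let Φ := (colim.mapIso (Functor.isoWhiskerLeft D e.toIso)).toEquiv
  have hsq : canonicalMap Y (D ⋙ G) (G.mapCocone c) ∘ Φ = e.homEquiv ∘ canonicalMap X D c := by
    funext x
    obtain ⟨j, f, rfl⟩ := Types.jointly_surjective' x
    simp only [Φ, Function.comp_apply, Iso.toEquiv_apply, Functor.mapIso_hom,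
      Functor.isoWhiskerLeft_hom, colim_map, colimit.ι_map_apply, Functor.whiskerLeft_app]
    change canonicalMap Y (D ⋙ G) _
      (colimit.ι ((D ⋙ G) ⋙ coyoneda.obj (op Y)) j (e.homEquiv f)) = _
    rw [canonicalMap_ι, canonicalMap_ι, e.homEquiv_comp]
    rfl
  rw [← Function.Injective.of_comp_iff' _ Φ.bijective, hsq,
    Function.Injective.of_comp_iff e.homEquiv.injective]

end CanonicalMap

open MonoidalCategory in
theorem statement4_general {C : Type u} [Category.{v} C] [MonoidalCategory C]
    [MonoidalClosed C] [LocallyPresentable C]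
    (hV1 : IsFinitelyPresented (𝟙_ C))
    (hV3 : IsSeparator (𝟙_ C))
    (M N : C) (hM : IsFinitelyGenerated M) (hN : IsFinitelyGenerated N) :
    IsFinitelyGenerated (M ⊗ N) := by
  intro J _ _ D c hc
  have hunit := (injective_canonicalMap_iff_of_corepresentableBy
    (((ihom.adjunction M).corepresentableBy (𝟙_ C)).ofIsoObj (ρ_ M).symm) D c).1 (hM J D c hc)
  have := mono_colimit_desc_of_isSeparator hV3 hV1 hunit
  exact (injective_canonicalMap_iff_of_corepresentableBy
    ((ihom.adjunction M).corepresentableBy N) D c).2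
    (injective_canonicalMap_of_mono_colimit_desc (hN J _ _ (colimit.isColimit _)))

open MonoidalCategory in
/-- In a locally presentable closed symmetric monoidal abelian category whose
unit is a finitely presented projective separator, the tensor product of two finitely
generated objects is finitely generated. -/
theorem statement4 {C : Type u} [Category.{v} C] [Abelian C] [MonoidalCategory C]
    [SymmetricCategory C] [MonoidalClosed C] [LocallyPresentable C]
    (hV1 : IsFinitelyPresented (𝟙_ C)) (hV2 : Projective (𝟙_ C))
    (hV3 : IsSeparator (𝟙_ C))
    (M N : C) (hM : IsFinitelyGenerated M) (hN : IsFinitelyGenerated N) :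
    IsFinitelyGenerated (M ⊗ N) :=
  statement4_general hV1 hV3 M N hM hN

end Paper
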